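/- As ε → 0⁺, the unique positive root B(ε) of the equation Φ(x/2 − ε/x) − e^ε Φ(−x/2 − ε/x) = δ converges to 2 Φ⁻¹(δ/2 + 1/2), where Φ⁻¹ is the inverse of the standard normal CDF. -/

import Mathlib

open MeasureTheory ProbabilityTheory Filter

noncomputable def frob {m n : ℕ} (M : Matrix (Fin m) (Fin n) ℝ) : ℝ :=
  Real.sqrt (∑ i, ∑ j, (M i j)^2)

noncomputable def sv {m n : ℕ} (M : Matrix (Fin m) (Fin n) ℝ) : Fin n → ℝ :=
  fun i => Real.sqrt ((show (M.transpose * M).IsHermitian by simpa using Matrix.isHermitian_conjTranspose_mul_self M).eigenvalues i)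

/-- `σ` is the non-increasingly ordered tuple of singular values of `M`. -/
def IsSVals {m n : ℕ} (M : Matrix (Fin m) (Fin n) ℝ) (σ : Fin n → ℝ) : Prop :=
  Antitone σ ∧ ∃ e : Equiv.Perm (Fin n), σ = sv M ∘ e

/-- Standard normal CDF. -/
noncomputable def Phi (t : ℝ) : ℝ :=
  (Real.sqrt (2 * Real.pi))⁻¹ * ∫ u in Set.Iic t, Real.exp (-u^2/2)

/-!
Write `s = B(ε)/2` and `t = ε/B(ε)`, so that the defining equation reads
`Φ(s - t) - e^ε Φ(-s - t) = δ`. Since `Φ` is `1/√(2π)`-Lipschitz, the equation forces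
`B(ε) ≥ δ√(2π)`, hence `t = O(ε)`. Comparing with `Φ(s) - Φ(-s) = 2Φ(s) - 1` then gives
`|2Φ(s) - 1 - δ| = O(t) + (e^ε - 1) → 0`, and strict monotonicity of `Φ` turns
`Φ(s) → Φ(c)` into `s → c`.
-/

open Real Set Topology

lemma integrable_exp_neg_sq_div_two : Integrable fun u : ℝ => exp (-u ^ 2 / 2) := by
  simpa [neg_div, div_eq_inv_mul] using integrable_exp_neg_mul_sq (b := 1 / 2) (by norm_num)

lemma Phi_sub_Phi (x y : ℝ) :
    Phi y - Phi x = (√(2 * π))⁻¹ * ∫ u in x..y, exp (-u ^ 2 / 2) := by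
  rw [Phi, Phi, ← mul_sub, intervalIntegral.integral_Iic_sub_Iic
    integrable_exp_neg_sq_div_two.integrableOn integrable_exp_neg_sq_div_two.integrableOn]

lemma Phi_strictMono : StrictMono Phi := fun x y hxy => by
  rw [← sub_pos, Phi_sub_Phi]
  exact mul_pos (by positivity) <| intervalIntegral.intervalIntegral_pos_of_pos_on
    integrable_exp_neg_sq_div_two.intervalIntegrable (fun u _ => exp_pos _) hxy

lemma Phi_sub_le {x y : ℝ} (h : x ≤ y) : Phi y - Phi x ≤ (√(2 * π))⁻¹ * (y - x) := by
  rw [Phi_sub_Phi]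
  gcongr
  have hbound := intervalIntegral.norm_integral_le_of_norm_le_const (a := x) (b := y) (C := 1)
    (f := fun u => exp (-u ^ 2 / 2)) fun u _ => by
      rw [norm_of_nonneg (exp_pos _).le, exp_le_one_iff]
      nlinarith [sq_nonneg u]
  rw [one_mul, abs_of_nonneg (sub_nonneg.2 h)] at hbound
  exact (le_abs_self _).trans hbound

lemma Phi_nonneg (x : ℝ) : 0 ≤ Phi x :=
  mul_nonneg (by positivity) <| setIntegral_nonneg measurableSet_Iic fun u _ => (exp_pos _).le

lemma Phi_add_Phi_neg (x : ℝ) : Phi x + Phi (-x) = 1 := by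
  have hreflect : ∫ u in Iic (-x), exp (-u ^ 2 / 2) = ∫ u in Ioi x, exp (-u ^ 2 / 2) := by
    have h := integral_comp_neg_Iic (-x) fun u : ℝ => exp (-u ^ 2 / 2)
    simp only [neg_sq, neg_neg] at h
    exact h
  have htotal : ∫ u, exp (-u ^ 2 / 2) = √(2 * π) := by
    simpa [neg_div, div_eq_inv_mul, show π / 2⁻¹ = 2 * π by ring] using integral_gaussian (1 / 2)
  rw [Phi, Phi, hreflect, ← mul_add, intervalIntegral.integral_Iic_add_Ioi
    integrable_exp_neg_sq_div_two.integrableOn integrable_exp_neg_sq_div_two.integrableOn, htotal]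
  exact inv_mul_cancel₀ (by positivity)

lemma Phi_le_one (x : ℝ) : Phi x ≤ 1 := by
  linarith [Phi_add_Phi_neg x, Phi_nonneg (-x)]

lemma StrictMono.tendsto_of_tendsto_comp {α β γ : Type*} [LinearOrder β] [TopologicalSpace β]
    [OrderTopology β] [Preorder γ] [TopologicalSpace γ] [OrderTopology γ] {f : β → γ}
    (hf : StrictMono f) {x : α → β} {l : Filter α} {c : β}
    (h : Tendsto (f ∘ x) l (𝓝 (f c))) : Tendsto x l (𝓝 c) := by
  refine tendsto_order.2 ⟨fun a ha => ?_, fun b hb => ?_⟩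
  · exact ((tendsto_order.1 h).1 (f a) (hf ha)).mono fun _ => hf.lt_iff_lt.1
  · exact ((tendsto_order.1 h).2 (f b) (hf hb)).mono fun _ => hf.lt_iff_lt.1

lemma mul_sqrt_two_pi_le_of_root {δ ε x : ℝ} (hε : 0 ≤ ε) (hx : 0 ≤ x)
    (hroot : Phi (x / 2 - ε / x) - exp ε * Phi (-x / 2 - ε / x) = δ) : δ * √(2 * π) ≤ x := by
  have hgap : δ ≤ Phi (x / 2 - ε / x) - Phi (-x / 2 - ε / x) := by
    linarith [mul_le_mul_of_nonneg_right (one_le_exp hε) (Phi_nonneg (-x / 2 - ε / x))]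
  have hlip := Phi_sub_le (show -x / 2 - ε / x ≤ x / 2 - ε / x by linarith)
  rw [show x / 2 - ε / x - (-x / 2 - ε / x) = x by ring] at hlip
  have hpi : 0 < √(2 * π) := by positivity
  calc δ * √(2 * π) ≤ (√(2 * π))⁻¹ * x * √(2 * π) := by gcongr; linarith
    _ = x := by field_simp

lemma abs_two_mul_Phi_half_sub_le_of_root {δ ε x : ℝ} (hε : 0 ≤ ε) (hx : 0 ≤ x)
    (hroot : Phi (x / 2 - ε / x) - exp ε * Phi (-x / 2 - ε / x) = δ) :
    |2 * Phi (x / 2) - 1 - δ| ≤ (√(2 * π))⁻¹ * (ε / x) + (exp ε - 1) := by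
  have ht : 0 ≤ ε / x := div_nonneg hε hx
  have hright := Phi_sub_le (show x / 2 - ε / x ≤ x / 2 by linarith)
  have hleft := Phi_sub_le (show -x / 2 - ε / x ≤ -x / 2 by linarith)
  have hright₀ := Phi_strictMono.monotone (show x / 2 - ε / x ≤ x / 2 by linarith)
  have hleft₀ := Phi_strictMono.monotone (show -x / 2 - ε / x ≤ -x / 2 by linarith)
  have hexp := one_le_exp hε
  have hexcess₀ := mul_nonneg (sub_nonneg.2 hexp) (Phi_nonneg (-x / 2 - ε / x))
  have hexcess₁ := mul_le_of_le_one_right (sub_nonneg.2 hexp) (Phi_le_one (-x / 2 - ε / x))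
  have hsymm := Phi_add_Phi_neg (x / 2)
  rw [show -(x / 2) = -x / 2 by ring] at hsymm
  rw [abs_le]
  constructor <;> linarith

theorem stmt13 (δ : ℝ) (hδ : δ ∈ Set.Ioo (0:ℝ) 1) (B : ℝ → ℝ)
    (hB : ∀ ε : ℝ, 0 < ε → 0 < B ε ∧
      Phi (B ε/2 - ε/(B ε)) - Real.exp ε * Phi (-(B ε)/2 - ε/(B ε)) = δ)
    (c : ℝ) (hc : Phi c = δ/2 + 1/2) :
    Tendsto B (nhdsWithin 0 (Set.Ioi 0)) (nhds (2*c)) := by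
  have hL : 0 < δ * √(2 * π) := mul_pos hδ.1 (by positivity)
  have hbound : ∀ᶠ ε in 𝓝[>] 0, ‖2 * Phi (B ε / 2) - 1 - δ‖ ≤
      (√(2 * π))⁻¹ * (ε / (δ * √(2 * π))) + (exp ε - 1) := by
    filter_upwards [self_mem_nhdsWithin] with ε (hε : 0 < ε)
    obtain ⟨hBpos, hroot⟩ := hB ε hε
    refine (abs_two_mul_Phi_half_sub_le_of_root hε.le hBpos.le hroot).trans ?_
    gcongr
    exact mul_sqrt_two_pi_le_of_root hε.le hBpos.le hroot
  have hrate : Tendsto (fun ε => (√(2 * π))⁻¹ * (ε / (δ * √(2 * π))) + (exp ε - 1))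
      (𝓝[>] 0) (𝓝 0) := by
    have hcont : Continuous fun ε => (√(2 * π))⁻¹ * (ε / (δ * √(2 * π))) + (exp ε - 1) := by
      fun_prop
    simpa using (hcont.tendsto 0).mono_left nhdsWithin_le_nhds
  have hPhi : Tendsto (Phi ∘ fun ε => B ε / 2) (𝓝[>] 0) (𝓝 (Phi c)) := by
    have h := tendsto_sub_nhds_zero_iff.1 (squeeze_zero_norm' hbound hrate)
    rw [hc]
    convert (h.add_const 1).div_const 2 using 1
    · ext ε; simp only [Function.comp_apply]; ring
    · ring_nf
  simpa [mul_div_cancel₀] using (Phi_strictMono.tendsto_of_tendsto_comp hPhi).const_mul 2
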